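/- In the higher tetrahedral algebra Λ = Λ(m,λ), for each vertex i of Q the element X_i^m lies in the right socle of Λ, i.e., X_i^m θ = 0 for every arrow θ starting at i. Here X_1 = δηγ = νμα, X_2 = ρωβ = εξσ, X_3 = ανμ = σεξ, X_4 = γδη = βρω, X_5 = ηγδ = ξσε, X_6 = ωβρ = μαν. -/

import Mathlib

open scoped TensorProduct

namespace HigherTetrahedral

/-- The twelve arrows of the tetrahedral triangulation quiver. -/
inductive Arr : Type
  | nu | de | ep | rh | si | al | ga | be | xi | et | om | mu
  deriving DecidableEq

instance instFintypeArr : Fintype Arr :=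
  ⟨⟨[Arr.nu, Arr.de, Arr.ep, Arr.rh, Arr.si, Arr.al, Arr.ga, Arr.be, Arr.xi, Arr.et, Arr.om, Arr.mu], by decide⟩, fun x => by cases x <;> decide⟩

open Arr

/-- Source vertex of each arrow (vertex `v` is `⟨v-1⟩ : Fin 6`). -/
def src : Arr → Fin 6
  | nu => 0 | de => 0 | ep => 1 | rh => 1 | si => 2 | al => 2
  | ga => 3 | be => 3 | xi => 4 | et => 4 | om => 5 | mu => 5

/-- Target vertex of each arrow. -/
def tgt : Arr → Fin 6
  | nu => 5 | de => 4 | ep => 4 | rh => 5 | si => 1 | al => 0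
  | ga => 0 | be => 1 | xi => 2 | et => 3 | om => 3 | mu => 2

/-- The permutation `f` of arrows, with orbits (δ η γ), (ε ξ σ), (ρ ω β), (ν μ α). -/
def f : Arr → Arr
  | de => et | et => ga | ga => de
  | ep => xi | xi => si | si => ep
  | rh => om | om => be | be => rh
  | nu => mu | mu => al | al => nu

/-- The permutation `g`: `g θ` is the arrow starting at `tgt θ` other than `f θ`. -/
def g : Arr → Arr
  | de => xi | et => be | ga => nu
  | ep => et | xi => al | si => rh
  | rh => mu | om => ga | be => ep
  | nu => om | mu => si | al => de

variable (K : Type) [Field K]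

/-- The ambient free algebra on the vertices and arrows. -/
abbrev FreeTet := FreeAlgebra K ((Fin 6) ⊕ Arr)

/-- Generator corresponding to a vertex. -/
def V (i : Fin 6) : FreeTet K := FreeAlgebra.ι K (Sum.inl i)

/-- Generator corresponding to an arrow. -/
def A (θ : Arr) : FreeTet K := FreeAlgebra.ι K (Sum.inr θ)

variable (m : ℕ) (lam : K)

/-- The defining relations of the higher tetrahedral algebra `Λ(m,λ)`, together with
the path-algebra relations for the vertex idempotents. -/
inductive TetRel : FreeTet K → FreeTet K → Prop
  | idem (i j : Fin 6) : TetRel (V K i * V K j) (if i = j then V K i else 0)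
  | sum_one : TetRel (∑ i : Fin 6, V K i) 1
  | src_tgt (θ : Arr) : TetRel (V K (src θ) * A K θ * V K (tgt θ)) (A K θ)
  | rel_ga : TetRel (A K ga * A K de)
      (A K be * A K ep + lam • ((A K be * A K rh * A K om) ^ (m - 1) * (A K be * A K ep)))
  | rel_rh : TetRel (A K rh * A K om)
      (A K ep * A K et + lam • ((A K ep * A K xi * A K si) ^ (m - 1) * (A K ep * A K et)))
  | rel_xi : TetRel (A K xi * A K si)
      (A K et * A K be + lam • ((A K et * A K ga * A K de) ^ (m - 1) * (A K et * A K be)))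
  | rel_de : TetRel (A K de * A K et) (A K nu * A K om)
  | rel_om : TetRel (A K om * A K be) (A K mu * A K si)
  | rel_si : TetRel (A K si * A K ep) (A K al * A K de)
  | rel_et : TetRel (A K et * A K ga) (A K xi * A K al)
  | rel_be : TetRel (A K be * A K rh) (A K ga * A K nu)
  | rel_ep : TetRel (A K ep * A K xi) (A K rh * A K mu)
  | rel_nu : TetRel (A K nu * A K mu) (A K de * A K xi)
  | rel_mu : TetRel (A K mu * A K al) (A K om * A K ga)
  | rel_al : TetRel (A K al * A K nu) (A K si * A K rh)
  | zero_rel (θ : Arr) : TetRel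
      ((A K θ * A K (f θ) * A K (f (f θ))) ^ (m - 1) * (A K θ * A K (f θ)) * A K (g (f θ))) 0

/-- The higher tetrahedral algebra `Λ(m,λ)`. -/
abbrev Tet := RingQuot (TetRel K m lam)

/-- The idempotent of `Λ(m,λ)` at a vertex. -/
def e (i : Fin 6) : Tet K m lam := RingQuot.mkAlgHom K (TetRel K m lam) (V K i)

/-- The image in `Λ(m,λ)` of an arrow. -/
def a (θ : Arr) : Tet K m lam := RingQuot.mkAlgHom K (TetRel K m lam) (A K θ)

/-- The elements `X_i` (vertex `i+1` in the paper's numbering):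
`X₁ = δηγ`, `X₂ = ρωβ`, `X₃ = ανμ`, `X₄ = γδη`, `X₅ = ηγδ`, `X₆ = ωβρ`. -/
def X : Fin 6 → Tet K m lam
  | 0 => a K m lam de * a K m lam et * a K m lam ga
  | 1 => a K m lam rh * a K m lam om * a K m lam be
  | 2 => a K m lam al * a K m lam nu * a K m lam mu
  | 3 => a K m lam ga * a K m lam de * a K m lam et
  | 4 => a K m lam et * a K m lam ga * a K m lam de
  | 5 => a K m lam om * a K m lam be * a K m lam rh

/-- Product in `Λ(m,λ)` of a list of arrows (a path, read left to right). -/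
def pathProd (l : List Arr) : Tet K m lam := (l.map (a K m lam)).prod

/-- `IsPath i j l` : the list of arrows `l` is a (composable) path from vertex `i`
to vertex `j`. -/
def IsPath (i j : Fin 6) (l : List Arr) : Prop :=
  l ≠ [] ∧ l.Chain' (fun x y => tgt x = src y) ∧
    (∀ h : l ≠ [], src (l.head h) = i ∧ tgt (l.getLast h) = j)

end HigherTetrahedral

/-
Write `X_i = x · f(x) · f²(x)` for the arrow `x` of the `f`-triangle at `i`; the two arrows
leaving `i` are `x` and `g(f² x)`. Rotating the cycle, `X_i^m g(f² x)` starts with `x` followed by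
`(f x · f² x · x)^(m-1) · f x · f² x · g(f² x)`, a zero relation. For `x` itself, the commutativity
relation at `f² x · x` (including its `λ`-correction) is left divisible by `g(f x)`, so
`X_i^m x` contains `(x · f x · f² x)^(m-1) · x · f x · g(f x)`, again a zero relation.
-/

theorem pow_succ_mul_eq_zero_of_rotate {R : Type*} [MonoidWithZero R] {x y z w : R} {k : ℕ}
    (h : (y * z * x) ^ k * (y * z) * w = 0) : (x * y * z) ^ (k + 1) * w = 0 :=
  calc (x * y * z) ^ (k + 1) * w = x * ((y * z * x) ^ k * (y * z) * w) := by
        rw [mul_assoc x y z, pow_succ, ← mul_assoc, mul_pow_mul]; simp only [mul_assoc]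
    _ = 0 := by rw [h, mul_zero]

theorem pow_succ_mul_eq_zero_of_dvd {R : Type*} [MonoidWithZero R] {x y z p : R} {k : ℕ}
    (hp : p ∣ z * x) (h : (x * y * z) ^ k * (x * y) * p = 0) : (x * y * z) ^ (k + 1) * x = 0 := by
  obtain ⟨s, hs⟩ := hp
  calc (x * y * z) ^ (k + 1) * x = (x * y * z) ^ k * (x * y) * (z * x) := by
        simp only [pow_succ, mul_assoc]
    _ = 0 := by rw [hs, ← mul_assoc, h, zero_mul]

theorem dvd_mul_add_smul_pow_mul {S R : Type*} [CommSemiring S] [Semiring R] [Algebra S R]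
    (p q u v : R) (c : S) (n : ℕ) : p ∣ p * q + c • ((p * u * v) ^ n * (p * q)) :=
  ⟨q + c • ((u * v * p) ^ n * q), by
    rw [mul_add, mul_smul_comm, mul_assoc p u v, ← mul_assoc _ p, mul_pow_mul]
    simp only [mul_assoc]⟩

namespace HigherTetrahedral

open Arr

theorem f_f_f (θ : Arr) : f (f (f θ)) = θ := by
  cases θ <;> rfl

def triangleArrow : Fin 6 → Arr
  | 0 => de | 1 => rh | 2 => al | 3 => ga | 4 => et | 5 => om

theorem eq_or_eq_of_src_eq {θ : Arr} {i : Fin 6} (h : src θ = i) :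
    θ = triangleArrow i ∨ θ = g (f (f (triangleArrow i))) := by
  revert θ i; decide

variable {K : Type} [Field K] {m : ℕ} {lam : K}

def cyc (θ : Arr) : Tet K m lam := a K m lam θ * a K m lam (f θ) * a K m lam (f (f θ))

theorem X_eq_cyc (i : Fin 6) : X K m lam i = cyc (triangleArrow i) := by
  fin_cases i <;> rfl

theorem a_dvd_of_rel {p q r s : Arr} (h : TetRel K m lam (A K p * A K q) (A K r * A K s)) :
    a K m lam r ∣ a K m lam p * a K m lam q :=
  ⟨a K m lam s, by simpa only [a, map_mul] using RingQuot.mkAlgHom_rel K h⟩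

theorem a_dvd_of_rel_smul {p q r s u v : Arr}
    (h : TetRel K m lam (A K p * A K q)
      (A K r * A K s + lam • ((A K r * A K u * A K v) ^ (m - 1) * (A K r * A K s)))) :
    a K m lam r ∣ a K m lam p * a K m lam q := by
  have hrel := RingQuot.mkAlgHom_rel K h
  simp only [map_mul, map_add, map_smul, map_pow] at hrel
  simpa only [a, hrel] using dvd_mul_add_smul_pow_mul _ _ _ _ lam (m - 1)

theorem a_g_f_dvd (θ : Arr) : a K m lam (g (f θ)) ∣ a K m lam (f (f θ)) * a K m lam θ := by
  cases θ
  exacts [a_dvd_of_rel .rel_al, a_dvd_of_rel_smul .rel_ga, a_dvd_of_rel .rel_si,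
    a_dvd_of_rel .rel_be, a_dvd_of_rel_smul .rel_xi, a_dvd_of_rel .rel_mu, a_dvd_of_rel .rel_et,
    a_dvd_of_rel .rel_om, a_dvd_of_rel .rel_ep, a_dvd_of_rel .rel_de, a_dvd_of_rel_smul .rel_rh,
    a_dvd_of_rel .rel_nu]

theorem cyc_pow_mul_a_mul_a_g_f (θ : Arr) :
    cyc θ ^ (m - 1) * (a K m lam θ * a K m lam (f θ)) * a K m lam (g (f θ)) = 0 := by
  simpa only [cyc, a, map_mul, map_pow, map_zero] using
    RingQuot.mkAlgHom_rel K (TetRel.zero_rel (K := K) (m := m) (lam := lam) θ)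

theorem cyc_pow_mul_self (hm : m ≠ 0) (θ : Arr) : cyc θ ^ m * a K m lam θ = 0 := by
  rw [show cyc θ ^ m = cyc θ ^ (m - 1 + 1) by rw [Nat.sub_one_add_one hm]]
  exact pow_succ_mul_eq_zero_of_dvd (a_g_f_dvd θ) (cyc_pow_mul_a_mul_a_g_f θ)

theorem cyc_pow_mul_g_f_f (hm : m ≠ 0) (θ : Arr) :
    cyc θ ^ m * a K m lam (g (f (f θ))) = 0 := by
  rw [show cyc θ ^ m = cyc θ ^ (m - 1 + 1) by rw [Nat.sub_one_add_one hm]]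
  apply pow_succ_mul_eq_zero_of_rotate
  simpa only [cyc, f_f_f] using cyc_pow_mul_a_mul_a_g_f (K := K) (m := m) (lam := lam) (f θ)

end HigherTetrahedral

open HigherTetrahedral Arr in
/-- For each vertex `i`, the element `X_i^m` lies in the right socle of `Λ(m,λ)`:
`X_i^m θ = 0` for every arrow `θ` starting at `i`. -/
theorem socle_pow (K : Type) [Field K] (m : ℕ) (hm : 2 ≤ m) (lam : K)
    (i : Fin 6) (θ : Arr) (hθ : src θ = i) :
    X K m lam i ^ m * a K m lam θ = 0 := by
  rw [X_eq_cyc]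
  rcases eq_or_eq_of_src_eq hθ with rfl | rfl
  · exact cyc_pow_mul_self (by omega) _
  · exact cyc_pow_mul_g_f_f (by omega) _
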